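/- Let 0 < q < 1, let A(ω) = a₁ω + a₀, B(ω) = b₂ω² + b₁ω + b₀ be real polynomials, let a ≤ 0 ≤ b, and let ϱ : ℝ → ℝ be continuous at 0, satisfy the q-Pearson equation and the boundary conditions ϱ(a)B(a) = ϱ(b)B(b) = 0, with the functional p ↦ ∫_a^b p(ω)ϱ(ω)d_qω positive definite. Define the rational functions β(x) = q(1−x)·[(a₀(1−q)−b₁)x + b₁q] / ((1−q)·[(a₁(1−q)−b₂)x² + b₂q²]) and η(x) = { [(a₀(1−q)−b₁)x + b₁q²]·[(a₀(1−q)−b₁)x + b₁q] / ([(a₁(1−q)−b₂)x² + b₂q²]·[(a₁(1−q)−b₂)x² + b₂q³]) + b₀(1−q)/[(a₁(1−q)−b₂)x² + b₂q³] } · q³(1−x)(1−q^{−1}x)/((1−q)²(1+q)), and set 𝓡_{AB}(x) = (1−q)x·[(∂_q η)(x) − β(x)(∂_q β)(x)] and 𝓓_{AB}(x) = (1−q)x·(∂_q β)(x), assuming all denominators occurring at the points x = qⁿ are nonzero. Then the monic orthogonal polynomial system (P̃_n)_{n≥0} for ϱ(ω)d_qω satisfies the three-term recurrence P̃_{n+1}(ω)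 + 𝓡_{AB}(qⁿ)·P̃_{n−1}(ω) = (ω − 𝓓_{AB}(qⁿ))·P̃_n(ω) for all n ≥ 1, with P̃₀(ω) = 1 and P̃₁(ω) = ω − 𝓓_{AB}(1). -/

import Mathlib

/-- The q-derivative of a function: `(∂_q f)(x) = (f(x) − f(qx))/((1−q)x)` (junk at `x = 0`). -/
noncomputable def qD (q : ℝ) (f : ℝ → ℝ) (x : ℝ) : ℝ :=
  (f x - f (q * x)) / ((1 - q) * x)

/-- The Jackson integral `∫_a^b f(ω) d_qω = (1−q)·∑_{k=0}^∞ qᵏ(b·f(qᵏb) − a·f(qᵏa))`. -/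
noncomputable def jackson (q a b : ℝ) (f : ℝ → ℝ) : ℝ :=
  (1 - q) * ∑' k : ℕ, q ^ k * (b * f (q ^ k * b) - a * f (q ^ k * a))

/-- Absolute convergence of the Jackson integral of `f` on `[a,b]`. -/
def JacksonSummable (q a b : ℝ) (f : ℝ → ℝ) : Prop :=
  Summable fun k : ℕ => |q ^ k * (b * f (q ^ k * b) - a * f (q ^ k * a))|


set_option linter.unreachableTactic false
set_option linter.unusedTactic false
set_option maxHeartbeats 4000000

open Polynomial Filter

namespace Stmt5

noncomputable def L (q a b : ℝ) (ϱ : ℝ → ℝ) (p : ℝ[X]) : ℝ :=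
  jackson q a b fun ω => p.eval ω * ϱ ω

noncomputable def J (q a b : ℝ) (ϱ : ℝ → ℝ) (p : ℝ[X]) (k : ℕ) : ℝ :=
  q ^ k * (b * (p.eval (q ^ k * b) * ϱ (q ^ k * b)) - a * (p.eval (q ^ k * a) * ϱ (q ^ k * a)))

variable {q a b : ℝ} {ϱ : ℝ → ℝ}

lemma L_eq (p : ℝ[X]) : L q a b ϱ p = (1 - q) * ∑' k : ℕ, J q a b ϱ p k := rfl

lemma summ (hs : ∀ p : ℝ[X], JacksonSummable q a b fun ω => p.eval ω * ϱ ω) (p : ℝ[X]) :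
    Summable (J q a b ϱ p) := (hs p).of_abs

lemma key (hq0 : 0 < q) (hq1 : q < 1) (A B : ℝ[X]) (hcont : ContinuousAt ϱ 0)
    (hPearson : ∀ ω : ℝ, ω ≠ 0 → qD q (fun x => ϱ x * B.eval x) ω = ϱ ω * A.eval ω)
    (hbdry : ϱ a * B.eval a = 0 ∧ ϱ b * B.eval b = 0)
    (hs : ∀ p : ℝ[X], JacksonSummable q a b fun ω => p.eval ω * ϱ ω) (k : ℕ) :
    L q a b ϱ (C ((1-q^k)/(1-q)) * (B * X^(k-1)) + C (q^k) * (A * X^k)) = 0 := by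
  have hq : (1:ℝ) - q ≠ 0 := by intro h; nlinarith
  set Sk : ℝ[X] := C ((1-q^k)/(1-q)) * (B * X^(k-1)) + C (q^k) * (A * X^k) with hSk
  set g : ℝ → ℝ := fun x => ϱ x * B.eval x * x^k with hg
  set u : ℕ → ℝ := fun m => g (q^m * b) - g (q^m * a) with hu
  have hptw : ∀ x : ℝ, (1-q) * (x * (Sk.eval x * ϱ x)) = g x - g (q*x) := by
    intro x
    by_cases hx : x = 0
    · simp [hx, hg]
    · have hP := hPearson x hx
      have hxq : (1-q)*x ≠ 0 := mul_ne_zero hq hx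
      rw [qD, div_eq_iff hxq] at hP
      have hP' : ϱ (q*x) * B.eval (q*x) = ϱ x * B.eval x - ϱ x * A.eval x * ((1-q)*x) := by
        linarith [hP]
      simp only [hg, hSk, eval_add, eval_mul, eval_C, eval_pow, eval_X]
      rw [hP']
      cases k with
      | zero => simp; ring
      | succ m =>
        have hred : (m + 1 - 1) = m := rfl
        rw [hred]
        field_simp
        ring
  have hterm : ∀ m : ℕ, J q a b ϱ Sk m = (u m - u (m+1))/(1-q) := by
    intro m
    have h1 := hptw (q^m * b)
    have h2 := hptw (q^m * a)
    rw [show q*(q^m*b) = q^(m+1)*b by ring] at h1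
    rw [show q*(q^m*a) = q^(m+1)*a by ring] at h2
    rw [eq_div_iff hq]
    simp only [J, hu]
    linear_combination h1 - h2
  have gcont : ContinuousAt g 0 := by
    exact (hcont.mul (B.continuous_aeval).continuousAt).mul (continuous_pow k).continuousAt
  have hulim : Tendsto u atTop (nhds 0) := by
    have hq' : Tendsto (fun m : ℕ => q^m) atTop (nhds 0) :=
      tendsto_pow_atTop_nhds_zero_of_lt_one hq0.le hq1
    have h1 : Tendsto (fun m : ℕ => g (q^m * b)) atTop (nhds (g 0)) := by
      have := gcont.tendsto.comp (by simpa using hq'.mul_const b)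
      exact this
    have h2 : Tendsto (fun m : ℕ => g (q^m * a)) atTop (nhds (g 0)) := by
      have := gcont.tendsto.comp (by simpa using hq'.mul_const a)
      exact this
    simpa using h1.sub h2
  have hsm := summ hs Sk
  have htel : ∑' m, J q a b ϱ Sk m = u 0 / (1-q) := by
    have h1 := hsm.hasSum.tendsto_sum_nat
    have h2 : Tendsto (fun n => ∑ i ∈ Finset.range n, J q a b ϱ Sk i) atTop
        (nhds (u 0 / (1-q))) := by
      have he : (fun n => ∑ i ∈ Finset.range n, J q a b ϱ Sk i)
          = fun n => u 0/(1-q) - u n/(1-q) := by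
        funext n
        have : ∀ i, J q a b ϱ Sk i = u i/(1-q) - u (i+1)/(1-q) := by
          intro i; rw [hterm i, sub_div]
        simp only [this]
        exact Finset.sum_range_sub' (fun i => u i/(1-q)) n
      rw [he]
      simpa using (tendsto_const_nhds.sub (hulim.div_const (1-q)))
    exact tendsto_nhds_unique h1 h2
  rw [L_eq, htel, mul_div_cancel₀ _ hq]
  simp only [hu, hg, pow_zero, one_mul]
  rw [hbdry.1, hbdry.2]
  ring

lemma L_add (hs : ∀ p : ℝ[X], JacksonSummable q a b fun ω => p.eval ω * ϱ ω) (p r : ℝ[X]) :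
    L q a b ϱ (p + r) = L q a b ϱ p + L q a b ϱ r := by
  have h : J q a b ϱ (p + r) = fun k => J q a b ϱ p k + J q a b ϱ r k := by
    funext k; simp only [J, eval_add]; ring
  rw [L_eq, L_eq, L_eq, h, Summable.tsum_add (summ hs p) (summ hs r)]; ring

lemma L_Cmul (c : ℝ) (p : ℝ[X]) : L q a b ϱ (C c * p) = c * L q a b ϱ p := by
  have h : J q a b ϱ (C c * p) = fun k => c * J q a b ϱ p k := by
    funext k; simp only [J, eval_mul, eval_C]; ring
  rw [L_eq, L_eq, h, tsum_mul_left]; ring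

lemma L_zero : L q a b ϱ 0 = 0 := by
  have h : J q a b ϱ 0 = fun _ => (0:ℝ) := by funext k; simp [J]
  rw [L_eq, h, tsum_zero, mul_zero]

lemma L_sum (hs : ∀ p : ℝ[X], JacksonSummable q a b fun ω => p.eval ω * ϱ ω)
    {ι : Type*} (s : Finset ι) (f : ι → ℝ[X]) :
    L q a b ϱ (∑ i ∈ s, f i) = ∑ i ∈ s, L q a b ϱ (f i) := by
  classical
  induction s using Finset.induction_on with
  | empty => simpa using L_zero
  | insert x s' hx ih =>
                    rw [Finset.sum_insert hx, Finset.sum_insert hx, L_add hs, ih]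



noncomputable def en (q : ℝ) (m : ℕ) : ℝ := (1 - q^m)/(1-q)
noncomputable def mu (q : ℝ) (m : ℕ) : ℝ := en q m * en q (m-1) / q^(m-1)
noncomputable def lam (q a₁ b₂ : ℝ) (m : ℕ) : ℝ := mu q m * b₂ + en q m * a₁
noncomputable def gam (q a₀ b₁ : ℝ) (m : ℕ) : ℝ := mu q m * b₁ + en q m * a₀

noncomputable def Mop (q : ℝ) (A B : ℝ[X]) (p : ℝ[X]) : ℝ[X] :=
  p.sum fun j c => C (c * mu q j) * (B * X^(j-2)) + C (c * en q j) * (A * X^(j-1))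

lemma en_zero {q : ℝ} : en q 0 = 0 := by simp [en]
lemma mu_zero {q : ℝ} : mu q 0 = 0 := by simp [mu, en]
lemma mu_one {q : ℝ} : mu q 1 = 0 := by simp [mu, en]

lemma Mop_add (q : ℝ) (A B p r : ℝ[X]) : Mop q A B (p + r) = Mop q A B p + Mop q A B r := by
  unfold Mop
  apply Polynomial.sum_add_index
  · intro i; simp
  · intro i c d; simp only [add_mul, C_add]; ring

lemma Mop_monomial (q : ℝ) (A B : ℝ[X]) (j : ℕ) (c : ℝ) :
    Mop q A B (monomial j c) = C (c * mu q j) * (B * X^(j-2)) + C (c * en q j) * (A * X^(j-1)) :=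
  Polynomial.sum_monomial_index c _ (by simp)

lemma Mop_X_pow (q : ℝ) (A B : ℝ[X]) (j : ℕ) :
    Mop q A B (X^j) = C (mu q j) * (B * X^(j-2)) + C (en q j) * (A * X^(j-1)) := by
  rw [X_pow_eq_monomial, Mop_monomial]; simp

lemma coeff_Mop (q a₀ a₁ b₀ b₁ b₂ : ℝ) (A B : ℝ[X])
    (hA : A = C a₁ * X + C a₀) (hB : B = C b₂ * X^2 + C b₁ * X + C b₀) (p : ℝ[X]) (k : ℕ) :
    (Mop q A B p).coeff k = lam q a₁ b₂ k * p.coeff k + gam q a₀ b₁ (k+1) * p.coeff (k+1)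
      + mu q (k+2) * b₀ * p.coeff (k+2) := by
  induction p using Polynomial.induction_on' with
  | add p r hp hr =>
    simp only [Mop_add, coeff_add, hp, hr]; ring
  | monomial j c =>
    rw [Mop_monomial]
    have hBX : ∀ e : ℕ, B * X^e = C b₂ * X^(e+2) + C b₁ * X^(e+1) + C b₀ * X^e := by
      intro e; rw [hB]; ring
    have hAX : ∀ e : ℕ, A * X^e = C a₁ * X^(e+1) + C a₀ * X^e := by
      intro e; rw [hA]; ring
    match j with
    | 0 =>
      rw [show ((0:ℕ)-2) = 0 from rfl, hBX 0, hAX 0]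
      by_cases h1 : k = 0
      · subst h1
        simp only [coeff_add, coeff_C_mul, coeff_X_pow, coeff_monomial, lam, gam,
          mu_zero, en_zero]
        split_ifs <;>
          first
            | contradiction
            | omega
            | (simp only [Nat.zero_add, Nat.add_zero, mu_one, mu_zero, en_zero]; ring)
            | ring
      · simp only [coeff_add, coeff_C_mul, coeff_X_pow, coeff_monomial, lam, gam,
          mu_zero, en_zero]
        split_ifs <;>
          first
            | contradiction
            | omega
            | (simp only [Nat.zero_add, Nat.add_zero, mu_one, mu_zero, en_zero]; ring)
            | ring
    | 1 =>
      rw [show ((1:ℕ)-2) = 0 from rfl, hBX 0, hAX 0]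
      by_cases h1 : k = 1
      · subst h1
        simp only [coeff_add, coeff_C_mul, coeff_X_pow, coeff_monomial, lam, gam, mu_one]
        split_ifs <;>
          first
            | contradiction
            | omega
            | (simp only [Nat.zero_add, Nat.add_zero, mu_one, mu_zero, en_zero]; ring)
            | ring
      · by_cases h0 : k = 0
        · subst h0
          simp only [coeff_add, coeff_C_mul, coeff_X_pow, coeff_monomial, lam, gam,
            mu_one, mu_zero, en_zero]
          split_ifs <;>
            first
              | contradiction
              | omega
              | (simp only [Nat.zero_add, Nat.add_zero, mu_one, mu_zero, en_zero]; ring)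
              | ring
        · simp only [coeff_add, coeff_C_mul, coeff_X_pow, coeff_monomial, lam, gam, mu_one]
          split_ifs <;>
            first
              | contradiction
              | omega
              | (simp only [Nat.zero_add, Nat.add_zero, mu_one, mu_zero, en_zero]; ring)
              | ring
    | (j'+2) =>
      rw [show j'+2-2 = j' from rfl, show j'+2-1 = j'+1 from rfl, hBX, hAX]
      by_cases h1 : j'+2 = k
      · subst h1
        simp only [coeff_add, coeff_C_mul, coeff_X_pow, coeff_monomial, lam, gam]
        split_ifs <;>
          first
            | contradiction
            | omega
            | (simp only [Nat.zero_add, Nat.add_zero, mu_one, mu_zero, en_zero]; ring)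
            | ring
      · by_cases h2 : j'+1 = k
        · subst h2
          simp only [coeff_add, coeff_C_mul, coeff_X_pow, coeff_monomial, lam, gam]
          split_ifs <;>
            first
              | contradiction
              | omega
              | (simp only [Nat.zero_add, Nat.add_zero, mu_one, mu_zero, en_zero]; ring)
              | ring
        · by_cases h3 : j' = k
          · subst h3
            simp only [coeff_add, coeff_C_mul, coeff_X_pow, coeff_monomial, lam, gam]
            split_ifs <;>
              first
                | contradiction
                | omega
                | (simp only [Nat.zero_add, Nat.add_zero, mu_one, mu_zero, en_zero]; ring)
                | ring
          · simp only [coeff_add, coeff_C_mul, coeff_X_pow, coeff_monomial, lam, gam]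
            split_ifs <;>
              first
                | contradiction
                | omega
                | (simp only [Nat.zero_add, Nat.add_zero, mu_one, mu_zero, en_zero]; ring)
                | ring



variable {q a b : ℝ} {ϱ : ℝ → ℝ}

lemma orthL (hs : ∀ p : ℝ[X], JacksonSummable q a b fun ω => p.eval ω * ϱ ω)
    (P : ℕ → ℝ[X]) (hP0 : P 0 = 1) (hmonic : ∀ n, (P n).Monic) (hdeg : ∀ n, (P n).natDegree = n)
    (horthL : ∀ n m : ℕ, n ≠ m → L q a b ϱ (P n * P m) = 0) :
    ∀ d : ℕ, ∀ r : ℝ[X], r.natDegree ≤ d → ∀ n : ℕ, d < n → L q a b ϱ (r * P n) = 0 := by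
  intro d
  induction d with
  | zero =>
    intro r hr n hn
    have hrC : r = C (r.coeff 0) := Polynomial.eq_C_of_natDegree_le_zero hr
    have h1 : r * P n = C (r.coeff 0) * (P 0 * P n) := by rw [hP0, one_mul, ← hrC]
    rw [h1, L_Cmul, horthL 0 n (by omega), mul_zero]
  | succ d ih =>
    intro r hr n hn
    set c := r.coeff (d+1) with hc
    have hd1 : (P (d+1)).coeff (d+1) = 1 := by
      have h := (hmonic (d+1)).coeff_natDegree
      rwa [hdeg (d+1)] at h
    have hr'deg : (r - C c * P (d+1)).natDegree ≤ d := by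
      rw [Polynomial.natDegree_le_iff_coeff_eq_zero]
      intro m hm
      rcases Nat.lt_or_ge (d+1) m with h | h
      · rw [Polynomial.coeff_sub, coeff_C_mul,
          Polynomial.coeff_eq_zero_of_natDegree_lt (lt_of_le_of_lt hr h),
          Polynomial.coeff_eq_zero_of_natDegree_lt (by rw [hdeg]; exact h)]
        ring
      · have hm' : m = d+1 := by omega
        subst hm'
        rw [Polynomial.coeff_sub, coeff_C_mul, hd1, ← hc]
        ring
    have hsplit : r = (r - C c * P (d+1)) + C c * P (d+1) := by ring
    rw [hsplit, add_mul, L_add hs, ih _ hr'deg n (by omega), mul_assoc, L_Cmul,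
      horthL (d+1) n (by omega), mul_zero, add_zero]

lemma zeroL (hs : ∀ p : ℝ[X], JacksonSummable q a b fun ω => p.eval ω * ϱ ω)
    (hpos : ∀ p : ℝ[X], p ≠ 0 → 0 < L q a b ϱ (p * p))
    (d : ℕ) (R : ℝ[X]) (hdR : R.natDegree ≤ d)
    (h : ∀ j : ℕ, j ≤ d → L q a b ϱ (X^j * R) = 0) : R = 0 := by
  by_contra hR
  have hLRR : L q a b ϱ (R * R) = 0 := by
    have hrep : R = ∑ j ∈ Finset.range (d+1), monomial j (R.coeff j) :=
      R.as_sum_range' (d+1) (by omega)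
    calc L q a b ϱ (R * R) = L q a b ϱ ((∑ j ∈ Finset.range (d+1), monomial j (R.coeff j)) * R) := by
          rw [← hrep]
      _ = L q a b ϱ (∑ j ∈ Finset.range (d+1), monomial j (R.coeff j) * R) := by
          rw [Finset.sum_mul]
      _ = ∑ j ∈ Finset.range (d+1), L q a b ϱ (monomial j (R.coeff j) * R) := L_sum hs _ _
      _ = 0 := by
          apply Finset.sum_eq_zero
          intro j hj
          rw [← Polynomial.C_mul_X_pow_eq_monomial, mul_assoc, L_Cmul,
            h j (by simpa using Nat.lt_succ_iff.mp (Finset.mem_range.mp hj)), mul_zero]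
  exact absurd hLRR (ne_of_gt (hpos R hR))


lemma en_ne (hq0 : 0 < q) (hq1 : q < 1) (m : ℕ) : en q (m+1) ≠ 0 := by
  have h1 : q^(m+1) < 1 := pow_lt_one₀ hq0.le hq1 (Nat.succ_ne_zero m)
  have h2 : (1:ℝ) - q ≠ 0 := by intro h; nlinarith
  exact div_ne_zero (by linarith) h2

lemma core (hq0 : 0 < q) (hq1 : q < 1) (A B : ℝ[X])
    (hs : ∀ p : ℝ[X], JacksonSummable q a b fun ω => p.eval ω * ϱ ω)
    (hkey : ∀ k : ℕ, en q (k+1) * L q a b ϱ (B * X^k) + q^(k+1) * L q a b ϱ (A * X^(k+1)) = 0)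
    (hLA0 : L q a b ϱ (A * X^0) = 0) :
    ∀ i j : ℕ, L q a b ϱ (Mop q A B (X^i) * X^j) = L q a b ϱ (Mop q A B (X^j) * X^i) := by
  have h1q : (1:ℝ) - q ≠ 0 := by intro h; nlinarith
  have hqne : q ≠ 0 := ne_of_gt hq0
  have hqp : ∀ m : ℕ, q^m ≠ 0 := fun m => pow_ne_zero m hqne
  have henne : ∀ m : ℕ, (1:ℝ) - q^(m+1) ≠ 0 := by
    intro m
    have h1 : q^(m+1) < 1 := pow_lt_one₀ hq0.le hq1 (Nat.succ_ne_zero m)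
    intro h; nlinarith
  have hLB : ∀ s : ℕ, L q a b ϱ (B * X^s)
      = -(q^(s+1) * L q a b ϱ (A * X^(s+1))) / en q (s+1) := by
    intro s
    have h := hkey s
    field_simp [en_ne hq0 hq1 s]
    linarith [h]
  have hM0 : Mop q A B (X^0) = 0 := by
    rw [Mop_X_pow]; simp [mu_zero, en_zero]
  have hM1 : Mop q A B (X^1) = C (en q 1) * (A * X^0) := by
    rw [Mop_X_pow, mu_one]; simp
  have expand : ∀ i j : ℕ, L q a b ϱ (Mop q A B (X^(i+2)) * X^j)
      = mu q (i+2) * L q a b ϱ (B * X^(i+j)) + en q (i+2) * L q a b ϱ (A * X^(i+1+j)) := by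
    intro i j
    rw [Mop_X_pow]
    have he : (C (mu q (i+2)) * (B * X^(i+2-2)) + C (en q (i+2)) * (A * X^(i+2-1))) * X^j
        = C (mu q (i+2)) * (B * X^(i+j)) + C (en q (i+2)) * (A * X^(i+1+j)) := by
      rw [show i+2-2 = i from rfl, show i+2-1 = i+1 from rfl]
      rw [show i+j = i+j from rfl]
      ring
    rw [he, L_add hs, L_Cmul, L_Cmul]
  have expand1 : ∀ j : ℕ, L q a b ϱ (Mop q A B (X^1) * X^j) = en q 1 * L q a b ϱ (A * X^j) := by
    intro j
    rw [hM1]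
    have he : C (en q 1) * (A * X^0) * X^j = C (en q 1) * (A * X^j) := by ring
    rw [he, L_Cmul]
  have hmu2 : ∀ m : ℕ, mu q (m+2) = en q (m+2) * en q (m+1) / q^(m+1) := fun m => rfl
  have Z : ∀ j : ℕ, L q a b ϱ (Mop q A B (X^j) * X^0) = 0 := by
    intro j
    match j with
    | 0 => rw [hM0, zero_mul, L_zero]
    | 1 => rw [expand1 0, hLA0, mul_zero]
    | (j'+2) =>
      rw [expand j' 0, show j'+0 = j' from rfl, show j'+1+0 = j'+1 from rfl, hLB j']
      rw [hmu2 j']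
      simp only [en]
      field_simp [h1q, hqne, hqp, henne]
      ring
  intro i j
  match i, j with
  | 0, j => rw [hM0, zero_mul, L_zero, Z j]
  | (i'+1), 0 => rw [Z (i'+1), hM0, zero_mul, L_zero]
  | 1, 1 => rfl
  | 1, (j'+2) =>
    rw [expand1 (j'+2), expand j' 1, hLB (j'+1), show j'+1+1 = j'+2 from rfl, hmu2 j']
    simp only [en]
    field_simp [h1q, hqne, hqp, henne]
    ring
  | (i'+2), 1 =>
    rw [expand1 (i'+2), expand i' 1, hLB (i'+1), show i'+1+1 = i'+2 from rfl, hmu2 i']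
    simp only [en]
    field_simp [h1q, hqne, hqp, henne]
    ring
  | (i'+2), (j'+2) =>
    rw [expand i' (j'+2), expand j' (i'+2),
      show i'+(j'+2) = i'+j'+2 by omega, show j'+(i'+2) = i'+j'+2 by omega,
      show i'+1+(j'+2) = i'+j'+3 by omega, show j'+1+(i'+2) = i'+j'+3 by omega]
    have h := hLB (i'+j'+2)
    rw [show i'+j'+2+1 = i'+j'+3 from rfl] at h
    rw [h, hmu2 i', hmu2 j']
    simp only [en]
    field_simp [h1q, hqne, hqp, henne]
    ring

lemma Msym (hq0 : 0 < q) (hq1 : q < 1) (A B : ℝ[X])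
    (hs : ∀ p : ℝ[X], JacksonSummable q a b fun ω => p.eval ω * ϱ ω)
    (hkey : ∀ k : ℕ, en q (k+1) * L q a b ϱ (B * X^k) + q^(k+1) * L q a b ϱ (A * X^(k+1)) = 0)
    (hLA0 : L q a b ϱ (A * X^0) = 0) (p : ℝ[X]) (j : ℕ) :
    L q a b ϱ (Mop q A B p * X^j) = L q a b ϱ (Mop q A B (X^j) * p) := by
  induction p using Polynomial.induction_on' with
  | add u v hu hv => rw [Mop_add, add_mul, L_add hs, hu, hv, mul_add, L_add hs]
  | monomial i c =>
    have hm : Mop q A B (monomial i c) = C c * Mop q A B (X^i) := by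
      rw [Mop_monomial, Mop_X_pow, C_mul, C_mul]; ring
    rw [hm, mul_assoc, L_Cmul, core hq0 hq1 A B hs hkey hLA0 i j,
      ← Polynomial.C_mul_X_pow_eq_monomial,
      show Mop q A B (X^j) * (C c * X^i) = C c * (Mop q A B (X^j) * X^i) by ring, L_Cmul]


lemma L_sub (hs : ∀ p : ℝ[X], JacksonSummable q a b fun ω => p.eval ω * ϱ ω) (p r : ℝ[X]) :
    L q a b ϱ (p - r) = L q a b ϱ p - L q a b ϱ r := by
  have h : p - r = p + C (-1) * r := by rw [map_neg, map_one]; ring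
  rw [h, L_add hs, L_Cmul]; ring


lemma Mdeg (q a₀ a₁ b₀ b₁ b₂ : ℝ) (A B : ℝ[X])
    (hA : A = C a₁ * X + C a₀) (hB : B = C b₂ * X^2 + C b₁ * X + C b₀) (p : ℝ[X]) :
    (Mop q A B p).natDegree ≤ p.natDegree := by
  rw [Polynomial.natDegree_le_iff_coeff_eq_zero]
  intro m hm
  rw [coeff_Mop q a₀ a₁ b₀ b₁ b₂ A B hA hB,
    Polynomial.coeff_eq_zero_of_natDegree_lt hm,
    Polynomial.coeff_eq_zero_of_natDegree_lt (by omega),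
    Polynomial.coeff_eq_zero_of_natDegree_lt (by omega)]
  ring

end Stmt5





namespace Stmt5

set_option maxHeartbeats 4000000

lemma mu_eq {q : ℝ} (hq : q ≠ 0) (h1q : (1:ℝ) - q ≠ 0) (m : ℕ) :
    mu q m = (1-q^m) * (1-q^m/q) * q / ((1-q)^2 * q^m) := by
  match m with
  | 0 => rw [Stmt5.mu_zero]; simp
  | (m'+1) =>
    have h : mu q (m'+1) = en q (m'+1) * en q m' / q^m' := rfl
    have hqp : (q:ℝ)^m' ≠ 0 := pow_ne_zero m' hq
    rw [h]
    simp only [Stmt5.en, pow_succ]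
    field_simp

lemma pivot1 {q : ℝ} (a₁ b₂ : ℝ) (hq : q ≠ 0) (h1q : (1:ℝ) - q ≠ 0) (m : ℕ) :
    (lam q a₁ b₂ (m+1) - lam q a₁ b₂ m) * ((1-q) * q^(m+2))
      = (a₁*(1-q) - b₂) * (q^(m+1))^2 + b₂ * q^2 := by
  have hqp : ∀ k : ℕ, (q:ℝ)^k ≠ 0 := fun k => pow_ne_zero k hq
  have e1 : (q:ℝ)^(m+1) = q^m*q := by ring
  have e2 : (q:ℝ)^(m+2) = q^m*(q*q) := by ring
  simp only [Stmt5.lam, mu_eq hq h1q, Stmt5.en]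
  rw [e1, e2]
  field_simp
  ring

lemma pivot2 {q : ℝ} (a₁ b₂ : ℝ) (hq : q ≠ 0) (h1q : (1:ℝ) - q ≠ 0) (m : ℕ) :
    (lam q a₁ b₂ (m+2) - lam q a₁ b₂ m) * ((1-q) * q^(m+4))
      = (1+q) * ((a₁*(1-q) - b₂) * (q^(m+2))^2 + b₂ * q^3) := by
  have hqp : ∀ k : ℕ, (q:ℝ)^k ≠ 0 := fun k => pow_ne_zero k hq
  have e2 : (q:ℝ)^(m+2) = q^m*(q*q) := by ring
  have e4 : (q:ℝ)^(m+4) = q^m*(q*q*q*q) := by ring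
  simp only [Stmt5.lam, mu_eq hq h1q, Stmt5.en]
  rw [e2, e4]
  field_simp
  ring

lemma betaid {q : ℝ} (a₀ a₁ b₀ b₁ b₂ : ℝ) (hq : q ≠ 0) (h1q : (1:ℝ) - q ≠ 0)
    (β : ℝ → ℝ)
    (hβ : ∀ x : ℝ, β x =
      q * (1 - x) * ((a₀ * (1 - q) - b₁) * x + b₁ * q)
        / ((1 - q) * ((a₁ * (1 - q) - b₂) * x ^ 2 + b₂ * q ^ 2)))
    (m : ℕ)
    (hd2 : (a₁ * (1 - q) - b₂) * (q ^ (m+1)) ^ 2 + b₂ * q ^ 2 ≠ 0) :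
    β (q^(m+1)) * (lam q a₁ b₂ (m+1) - lam q a₁ b₂ m) = gam q a₀ b₁ (m+1) := by
  have hqp : ∀ k : ℕ, (q:ℝ)^k ≠ 0 := fun k => pow_ne_zero k hq
  have e1 : (q:ℝ)^(m+1) = q^m*q := by ring
  rw [hβ]
  simp only [Stmt5.lam, Stmt5.gam, mu_eq hq h1q, Stmt5.en]
  rw [e1] at hd2 ⊢
  have h2 : ((q:ℝ)^m*q)^2 = q^m*q*(q^m*q) := by ring
  rw [h2] at hd2 ⊢
  rw [div_mul_eq_mul_div, div_eq_iff (mul_ne_zero h1q hd2)]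
  field_simp
  ring

lemma etaid {q : ℝ} (a₀ a₁ b₀ b₁ b₂ : ℝ) (hq : q ≠ 0) (h1q : (1:ℝ) - q ≠ 0)
    (h1q' : (1:ℝ) + q ≠ 0) (η β : ℝ → ℝ)
    (hβ : ∀ x : ℝ, β x =
      q * (1 - x) * ((a₀ * (1 - q) - b₁) * x + b₁ * q)
        / ((1 - q) * ((a₁ * (1 - q) - b₂) * x ^ 2 + b₂ * q ^ 2)))
    (hη : ∀ x : ℝ, η x =
      (((a₀ * (1 - q) - b₁) * x + b₁ * q ^ 2) * ((a₀ * (1 - q) - b₁) * x + b₁ * q)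
          / (((a₁ * (1 - q) - b₂) * x ^ 2 + b₂ * q ^ 2)
              * ((a₁ * (1 - q) - b₂) * x ^ 2 + b₂ * q ^ 3))
        + b₀ * (1 - q) / ((a₁ * (1 - q) - b₂) * x ^ 2 + b₂ * q ^ 3))
      * (q ^ 3 * (1 - x) * (1 - q⁻¹ * x) / ((1 - q) ^ 2 * (1 + q))))
    (m : ℕ)
    (hd2 : (a₁ * (1 - q) - b₂) * (q ^ (m+2)) ^ 2 + b₂ * q ^ 2 ≠ 0)
    (hd3 : (a₁ * (1 - q) - b₂) * (q ^ (m+2)) ^ 2 + b₂ * q ^ 3 ≠ 0) :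
    η (q^(m+2)) * (lam q a₁ b₂ (m+2) - lam q a₁ b₂ m)
      = gam q a₀ b₁ (m+1) * β (q^(m+2)) + mu q (m+2) * b₀ := by
  have hqp : ∀ k : ℕ, (q:ℝ)^k ≠ 0 := fun k => pow_ne_zero k hq
  have e1 : (q:ℝ)^(m+1) = q^m*q := by ring
  have e2 : (q:ℝ)^(m+2) = q^m*(q*q) := by ring
  rw [hβ, hη]
  rw [mul_div_assoc' (gam q a₀ b₁ (m+1)), div_add' _ _ _ (mul_ne_zero h1q hd2),
    eq_div_iff (mul_ne_zero h1q hd2)]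
  simp only [Stmt5.lam, Stmt5.gam, mu_eq hq h1q, Stmt5.en]
  rw [e2] at hd2 hd3 ⊢
  rw [e1]
  have h2 : ((q:ℝ)^m*(q*q))^2 = q^m*(q*q)*(q^m*(q*q)) := by ring
  rw [h2] at hd2 hd3 ⊢
  rw [div_add_div _ _ (mul_ne_zero hd2 hd3) hd3, div_mul_div_comm, div_mul_eq_mul_div, div_mul_eq_mul_div, div_mul_eq_mul_div,
    div_eq_iff (mul_ne_zero (mul_ne_zero (mul_ne_zero hd2 hd3) hd3) (mul_ne_zero (pow_ne_zero 2 h1q) h1q'))]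
  field_simp
  ring


end Stmt5

open Polynomial Stmt5

/-- For Pearson data `(A, B)` on `[a,b]` with positive definite moment
functional, define the rational functions `β`, `η`, and the structural functions
`𝓡_{AB}(x) = (1−q)x[(∂_q η)(x) − β(x)(∂_q β)(x)]`, `𝓓_{AB}(x) = (1−q)x(∂_q β)(x)`
(assuming the denominators occurring at the points `x = qⁿ` are nonzero).  Then the monic
orthogonal polynomial system `(P̃_n)` for `ϱ(ω)d_qω` satisfies the three-term recurrence
`P̃_{n+1}(ω) + 𝓡_{AB}(qⁿ)·P̃_{n−1}(ω) = (ω − 𝓓_{AB}(qⁿ))·P̃_n(ω)` for `n ≥ 1`, with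
`P̃₀ = 1` and `P̃₁(ω) = ω − 𝓓_{AB}(1)`. -/
theorem stmt_5 (q a₀ a₁ b₀ b₁ b₂ a b : ℝ) (hq0 : 0 < q) (hq1 : q < 1)
    (hab : a ≤ 0 ∧ 0 ≤ b)
    (A B : Polynomial ℝ)
    (hA : A = Polynomial.C a₁ * Polynomial.X + Polynomial.C a₀)
    (hB : B = Polynomial.C b₂ * Polynomial.X ^ 2 + Polynomial.C b₁ * Polynomial.X
      + Polynomial.C b₀)
    (ϱ : ℝ → ℝ) (hcont : ContinuousAt ϱ 0)
    (hPearson : ∀ ω : ℝ, ω ≠ 0 →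
      qD q (fun x => ϱ x * B.eval x) ω = ϱ ω * A.eval ω)
    (hbdry : ϱ a * B.eval a = 0 ∧ ϱ b * B.eval b = 0)
    (hsum : ∀ p : Polynomial ℝ, JacksonSummable q a b (fun ω => p.eval ω * ϱ ω))
    (hposdef : ∀ p : Polynomial ℝ, p ≠ 0 →
      0 < jackson q a b (fun ω => (p.eval ω) ^ 2 * ϱ ω))
    (β η RAB DAB : ℝ → ℝ)
    (hβ : ∀ x : ℝ, β x =
      q * (1 - x) * ((a₀ * (1 - q) - b₁) * x + b₁ * q)
        / ((1 - q) * ((a₁ * (1 - q) - b₂) * x ^ 2 + b₂ * q ^ 2)))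
    (hη : ∀ x : ℝ, η x =
      (((a₀ * (1 - q) - b₁) * x + b₁ * q ^ 2) * ((a₀ * (1 - q) - b₁) * x + b₁ * q)
          / (((a₁ * (1 - q) - b₂) * x ^ 2 + b₂ * q ^ 2)
              * ((a₁ * (1 - q) - b₂) * x ^ 2 + b₂ * q ^ 3))
        + b₀ * (1 - q) / ((a₁ * (1 - q) - b₂) * x ^ 2 + b₂ * q ^ 3))
      * (q ^ 3 * (1 - x) * (1 - q⁻¹ * x) / ((1 - q) ^ 2 * (1 + q))))
    (hRAB : ∀ x : ℝ, RAB x = (1 - q) * x * (qD q η x - β x * qD q β x))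
    (hDAB : ∀ x : ℝ, DAB x = (1 - q) * x * qD q β x)
    (hdenom : ∀ n : ℕ,
      (a₁ * (1 - q) - b₂) * (q ^ n) ^ 2 + b₂ * q ^ 2 ≠ 0 ∧
      (a₁ * (1 - q) - b₂) * (q ^ n) ^ 2 + b₂ * q ^ 3 ≠ 0)
    (P : ℕ → Polynomial ℝ)
    (hmonic : ∀ n : ℕ, (P n).Monic)
    (hdeg : ∀ n : ℕ, (P n).natDegree = n)
    (horth : ∀ n m : ℕ, n ≠ m →
      jackson q a b (fun ω => (P n).eval ω * (P m).eval ω * ϱ ω) = 0) :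
    (∀ n : ℕ, 1 ≤ n →
      P (n + 1) + Polynomial.C (RAB (q ^ n)) * P (n - 1)
        = (Polynomial.X - Polynomial.C (DAB (q ^ n))) * P n) ∧
    P 0 = 1 ∧ P 1 = Polynomial.X - Polynomial.C (DAB 1) := by
  classical
  have h1q : (1:ℝ) - q ≠ 0 := by intro h; nlinarith
  have hqne : q ≠ 0 := ne_of_gt hq0
  have hqp : ∀ m : ℕ, (q:ℝ)^m ≠ 0 := fun m => pow_ne_zero m hqne
  have henne : ∀ m : ℕ, (1:ℝ) - q^(m+1) ≠ 0 := by
    intro m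
    have h1 : q^(m+1) < 1 := pow_lt_one₀ hq0.le hq1 (Nat.succ_ne_zero m)
    intro h; nlinarith
  have hP0 : P 0 = 1 := (hmonic 0).natDegree_eq_zero.mp (hdeg 0)
  have htop : ∀ k : ℕ, (P k).coeff k = 1 := by
    intro k
    have h := (hmonic k).coeff_natDegree
    rwa [hdeg k] at h
  have habove : ∀ k j : ℕ, k < j → (P k).coeff j = 0 := by
    intro k j h
    exact Polynomial.coeff_eq_zero_of_natDegree_lt (by rw [hdeg]; exact h)
  have horthL : ∀ n m : ℕ, n ≠ m → L q a b ϱ (P n * P m) = 0 := by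
    intro n m hnm
    have h := horth n m hnm
    unfold Stmt5.L
    have he : (fun ω => (P n * P m).eval ω * ϱ ω)
        = fun ω => (P n).eval ω * (P m).eval ω * ϱ ω := by
      funext ω; rw [eval_mul]
    rw [he]; exact h
  have hpos : ∀ p : ℝ[X], p ≠ 0 → 0 < L q a b ϱ (p * p) := by
    intro p hp
    have h := hposdef p hp
    unfold Stmt5.L
    have he : (fun ω => (p * p).eval ω * ϱ ω) = fun ω => (p.eval ω)^2 * ϱ ω := by
      funext ω; rw [eval_mul]; ring
    rw [he]; exact h
  have hkey : ∀ k : ℕ, en q (k+1) * L q a b ϱ (B * X^k)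
      + q^(k+1) * L q a b ϱ (A * X^(k+1)) = 0 := by
    intro k
    have h := Stmt5.key hq0 hq1 A B hcont hPearson hbdry hsum (k+1)
    rw [L_add hsum, L_Cmul, L_Cmul, show k+1-1 = k from rfl] at h
    simpa [Stmt5.en] using h
  have hLA0 : L q a b ϱ (A * X^0) = 0 := by
    have h := Stmt5.key hq0 hq1 A B hcont hPearson hbdry hsum 0
    rw [L_add hsum, L_Cmul, L_Cmul] at h
    simpa using h
  have orthl := Stmt5.orthL hsum P hP0 hmonic hdeg horthL
  have Msym' := Stmt5.Msym hq0 hq1 A B hsum hkey hLA0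
  have coeffM := Stmt5.coeff_Mop q a₀ a₁ b₀ b₁ b₂ A B hA hB
  have mdeg := Stmt5.Mdeg q a₀ a₁ b₀ b₁ b₂ A B hA hB
  -- the eigenvalue equation
  have eig : ∀ n : ℕ, Mop q A B (P n) = C (lam q a₁ b₂ n) * P n := by
    intro n
    rcases Nat.eq_zero_or_pos n with rfl | hn
    · have h0 : Mop q A B (P 0) = 0 := by
        apply Polynomial.ext
        intro k
        rw [coeffM, coeff_zero, hP0]
        rcases Nat.eq_zero_or_pos k with rfl | hk
        · simp [Stmt5.lam, Stmt5.mu_zero, Stmt5.en_zero, Polynomial.coeff_one]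
        · simp [Polynomial.coeff_one, Nat.pos_iff_ne_zero.mp hk,
            (by omega : ¬ (k+1 = 0)), (by omega : ¬ (k+2 = 0))]
      rw [h0, hP0]
      have hl : lam q a₁ b₂ 0 = 0 := by simp [Stmt5.lam, Stmt5.mu_zero, Stmt5.en_zero]
      rw [hl, map_zero, zero_mul]
    · set R := Mop q A B (P n) - C (lam q a₁ b₂ n) * P n with hR
      have hcoefftop : ∀ k, n ≤ k → R.coeff k = 0 := by
        intro k hk
        rw [hR, coeff_sub, coeffM, coeff_C_mul]
        rcases eq_or_lt_of_le hk with heq | hlt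
        · rw [← heq, htop n, habove n (n+1) (by omega), habove n (n+2) (by omega)]
          ring
        · rw [habove n k hlt, habove n (k+1) (by omega), habove n (k+2) (by omega)]
          ring
      have hdegR : R.natDegree ≤ n-1 :=
        Polynomial.natDegree_le_iff_coeff_eq_zero.mpr (fun m hm => hcoefftop m (by omega))
      have horthR : ∀ j, j ≤ n-1 → L q a b ϱ (X^j * R) = 0 := by
        intro j hj
        have hj' : j < n := by omega
        have e1 : X^j * R = Mop q A B (P n) * X^j - C (lam q a₁ b₂ n) * (X^j * P n) := by
          rw [hR]; ring
        rw [e1, L_sub hsum, Msym' (P n) j, L_Cmul,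
          orthl j (Mop q A B (X^j)) (le_trans (mdeg (X^j)) (le_of_eq (natDegree_X_pow j))) n hj',
          orthl j (X^j) (le_of_eq (natDegree_X_pow j)) n hj', mul_zero, sub_zero]
      have hR0 : R = 0 := Stmt5.zeroL hsum hpos (n-1) R hdegR horthR
      rw [hR] at hR0
      exact sub_eq_zero.mp hR0
  have h1q' : (1:ℝ) + q ≠ 0 := by intro h; nlinarith
  have hcoeff1 : ∀ m : ℕ, (lam q a₁ b₂ (m+1) - lam q a₁ b₂ m) * (P (m+1)).coeff m
      = gam q a₀ b₁ (m+1) := by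
    intro m
    have h := congrArg (fun p : ℝ[X] => p.coeff m) (eig (m+1))
    simp only [coeffM, coeff_C_mul] at h
    rw [htop (m+1), habove (m+1) (m+2) (by omega)] at h
    linear_combination -h
  have pivot1ne : ∀ m : ℕ, lam q a₁ b₂ (m+1) - lam q a₁ b₂ m ≠ 0 := by
    intro m h
    have hp := Stmt5.pivot1 a₁ b₂ hqne h1q m
    rw [h, zero_mul] at hp
    exact (hdenom (m+1)).1 hp.symm
  have pivot2ne : ∀ m : ℕ, lam q a₁ b₂ (m+2) - lam q a₁ b₂ m ≠ 0 := by
    intro m h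
    have hp := Stmt5.pivot2 a₁ b₂ hqne h1q m
    rw [h, zero_mul] at hp
    rcases mul_eq_zero.mp hp.symm with h' | h'
    · exact h1q' h'
    · exact (hdenom (m+2)).2 h'
  have bval : ∀ m : ℕ, (P (m+1)).coeff m = β (q^(m+1)) := by
    intro m
    have hid := Stmt5.betaid a₀ a₁ b₀ b₁ b₂ hqne h1q β hβ m (hdenom (m+1)).1
    have h1 := hcoeff1 m
    rw [← hid, mul_comm (β (q^(m+1)))] at h1
    exact mul_left_cancel₀ (pivot1ne m) h1
  have hcoeff2 : ∀ m : ℕ, (lam q a₁ b₂ (m+2) - lam q a₁ b₂ m) * (P (m+2)).coeff m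
      = gam q a₀ b₁ (m+1) * (P (m+2)).coeff (m+1) + mu q (m+2) * b₀ := by
    intro m
    have h := congrArg (fun p : ℝ[X] => p.coeff m) (eig (m+2))
    simp only [coeffM, coeff_C_mul] at h
    rw [htop (m+2)] at h
    linear_combination -h
  have cval : ∀ m : ℕ, (P (m+2)).coeff m = η (q^(m+2)) := by
    intro m
    have hid := Stmt5.etaid a₀ a₁ b₀ b₁ b₂ hqne h1q h1q' η β hβ hη m
      (hdenom (m+2)).1 (hdenom (m+2)).2
    have h2 := hcoeff2 m
    have hb2 : (P (m+2)).coeff (m+1) = β (q^(m+2)) := by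
      have h := bval (m+1)
      rwa [show m+1+1 = m+2 from rfl] at h
    rw [hb2, ← hid, mul_comm (η (q^(m+2)))] at h2
    exact mul_left_cancel₀ (pivot2ne m) h2
  -- values of DAB and RAB on the lattice
  have DABval : ∀ n : ℕ, DAB (q^n) = β (q^n) - β (q^(n+1)) := by
    intro n
    rw [hDAB, qD, show q * q^n = q^(n+1) by ring]
    field_simp
  have RABval : ∀ n : ℕ, RAB (q^n)
      = (η (q^n) - η (q^(n+1))) - β (q^n) * (β (q^n) - β (q^(n+1))) := by
    intro n
    rw [hRAB, qD, qD, show q * q^n = q^(n+1) by ring]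
    field_simp
  have hη1 : η q = 0 := by
    rw [hη, inv_mul_cancel₀ hqne]
    simp
  have hβ1 : β 1 = 0 := by rw [hβ]; simp
  have hDAB1 : DAB 1 = β 1 - β q := by
    rw [hDAB, qD]
    simp only [mul_one]
    field_simp
  refine ⟨?_, hP0, ?_⟩
  · -- the three-term recurrence
    intro n hn
    obtain ⟨m, rfl⟩ : ∃ m, n = m+1 := ⟨n-1, by omega⟩
    rw [show m+1-1 = m from rfl]
    suffices hGz : (X - C (DAB (q^(m+1)))) * P (m+1)
        - (P (m+1+1) + C (RAB (q^(m+1))) * P m) = 0 by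
      exact (sub_eq_zero.mp hGz).symm
    have hGtop : ∀ k, m+1 ≤ k → ((X - C (DAB (q^(m+1)))) * P (m+1)
        - (P (m+1+1) + C (RAB (q^(m+1))) * P m)).coeff k = 0 := by
      intro k hk
      obtain ⟨k', rfl⟩ : ∃ k', k = k'+1 := ⟨k-1, by omega⟩
      simp only [coeff_sub, coeff_add, sub_mul, coeff_X_mul, coeff_C_mul]
      by_cases h1 : k' = m
      · subst h1
        rw [bval k', htop (k'+1)]
        have hb2 : (P (k'+1+1)).coeff (k'+1) = β (q^(k'+1+1)) := bval (k'+1)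
        rw [hb2, habove k' (k'+1) (by omega), DABval (k'+1)]
        ring
      · by_cases h2 : k' = m+1
        · subst h2
          rw [htop (m+1), habove (m+1) (m+1+1) (by omega), habove m (m+1+1) (by omega),
            htop (m+1+1)]
          ring
        · rw [habove (m+1) k' (by omega), habove (m+1) (k'+1) (by omega),
            habove (m+1+1) (k'+1) (by omega), habove m (k'+1) (by omega)]
          ring
    have hGm : ((X - C (DAB (q^(m+1)))) * P (m+1)
        - (P (m+1+1) + C (RAB (q^(m+1))) * P m)).coeff m = 0 := by
      cases m with
      | zero =>
        simp only [coeff_sub, coeff_add, sub_mul, coeff_C_mul]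
        rw [Polynomial.mul_coeff_zero, Polynomial.coeff_X_zero, hP0, bval 0]
        have hc2 : (P (0+1+1)).coeff 0 = η (q^(0+1+1)) := by
          have h := cval 0
          rwa [show (0:ℕ)+2 = 0+1+1 from rfl] at h
        rw [hc2, DABval (0+1), RABval (0+1)]
        have he : η (q^(0+1)) = 0 := by
          rw [show (0:ℕ)+1 = 1 from rfl, pow_one]; exact hη1
        rw [he]
        simp only [Polynomial.coeff_one_zero]
        ring
      | succ m' =>
        simp only [coeff_sub, coeff_add, sub_mul, coeff_C_mul, coeff_X_mul]
        have hcv : (P (m'+1+1)).coeff m' = η (q^(m'+1+1)) := by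
          have h := cval m'
          rwa [show m'+2 = m'+1+1 from rfl] at h
        have hcv2 : (P (m'+1+1+1)).coeff (m'+1) = η (q^(m'+1+1+1)) := by
          have h := cval (m'+1)
          rwa [show m'+1+2 = m'+1+1+1 from rfl] at h
        have hbv : (P (m'+1+1)).coeff (m'+1) = β (q^(m'+1+1)) := bval (m'+1)
        rw [hcv, hcv2, hbv, htop (m'+1), DABval (m'+1+1), RABval (m'+1+1)]
        ring
    cases m with
    | zero =>
      apply Polynomial.ext
      intro k
      rw [coeff_zero]
      rcases Nat.eq_zero_or_pos k with rfl | hk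
      · exact hGm
      · exact hGtop k (by omega)
    | succ m' =>
      apply Stmt5.zeroL hsum hpos m' _ ?_ ?_
      · rw [Polynomial.natDegree_le_iff_coeff_eq_zero]
        intro k hk
        by_cases h1 : k = m'+1
        · subst h1; exact hGm
        · exact hGtop k (by omega)
      · intro j hj
        have e : X^j * ((X - C (DAB (q^(m'+1+1)))) * P (m'+1+1)
            - (P (m'+1+1+1) + C (RAB (q^(m'+1+1))) * P (m'+1)))
            = (X^(j+1) - C (DAB (q^(m'+1+1))) * X^j) * P (m'+1+1)
            - (X^j * P (m'+1+1+1) + C (RAB (q^(m'+1+1))) * (X^j * P (m'+1))) := by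
          ring
        have hr : (X^(j+1) - C (DAB (q^(m'+1+1))) * X^j : ℝ[X]).natDegree ≤ j+1 := by
          refine le_trans (Polynomial.natDegree_sub_le _ _)
            (max_le (le_of_eq (natDegree_X_pow _)) ?_)
          exact le_trans (natDegree_C_mul_le _ _) (by rw [natDegree_X_pow]; omega)
        rw [e, L_sub hsum, L_add hsum, L_Cmul,
          orthl (j+1) _ hr (m'+1+1) (by omega),
          orthl j (X^j) (le_of_eq (natDegree_X_pow j)) (m'+1+1+1) (by omega),
          orthl j (X^j) (le_of_eq (natDegree_X_pow j)) (m'+1) (by omega)]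
        ring
  · -- P 1
    have h := (hmonic 1).eq_X_add_C (hdeg 1)
    have hc : (P 1).coeff 0 = -(DAB 1) := by
      have hb := bval 0
      rw [show (0:ℕ)+1 = 1 from rfl, pow_one] at hb
      rw [hb, hDAB1, hβ1]
      ring
    rw [h, hc, map_neg, sub_eq_add_neg]
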